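/- For N ≥ 1, the set ℐ of all Cantor sets X ⊆ ℝ^N such that for some non-zero linear subspace L ⊆ ℝ^N the projection p_L(X) has more than one point and has an isolated point, is a meager F_σ subset of 𝒞(ℝ^N). -/

import Mathlib

noncomputable def proj {N : ℕ} (L : Submodule ℝ (EuclideanSpace ℝ (Fin N))) :
    EuclideanSpace ℝ (Fin N) → EuclideanSpace ℝ (Fin N) :=
  fun x => (L.orthogonalProjectionOnto x : EuclideanSpace ℝ (Fin N))

/-- A Cantor set in ℝ^N: a non-empty compact perfect totally disconnected subset
(equivalently, a subset homeomorphic to the middle-thirds Cantor set). -/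
def IsCantorSet {N : ℕ} (A : Set (EuclideanSpace ℝ (Fin N))) : Prop :=
  A.Nonempty ∧ IsCompact A ∧ Perfect A ∧ IsTotallyDisconnected A

/-- The space `𝒞(ℝ^N)` of Cantor sets in ℝ^N, topologized via the Hausdorff metric
(as a subspace of the space of non-empty compact subsets). -/
abbrev CantorSets (N : ℕ) :=
  {K : TopologicalSpace.NonemptyCompacts (EuclideanSpace ℝ (Fin N)) //
    IsCantorSet (K : Set (EuclideanSpace ℝ (Fin N)))}

open Set Metric

lemma preCantorSet_subset_Icc (n : ℕ) : preCantorSet n ⊆ Set.Icc (0:ℝ) 1 := by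
  induction n with
  | zero => simp [preCantorSet]
  | succ n ih =>
    rintro x (⟨y, hy, rfl⟩ | ⟨y, hy, rfl⟩) <;>
      obtain ⟨h0, h1⟩ := ih hy <;> constructor <;> simp only [] <;> linarith

lemma cantorSet_eq : cantorSet =
    (· / 3) '' cantorSet ∪ (fun x => (2 + x) / 3) '' cantorSet := by
  ext x
  constructor
  · intro hx
    have hx' : ∀ n, x ∈ preCantorSet n := fun n => Set.mem_iInter.mp hx n
    by_cases hle : x ≤ 1/2
    · have key : ∀ n, 3 * x ∈ preCantorSet n := by
        intro n
        rcases hx' (n+1) with ⟨y, hy, hyx⟩ | ⟨y, hy, hyx⟩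
        · simp only [] at hyx
          have : 3 * x = y := by linarith
          rwa [this]
        · have h0 := (preCantorSet_subset_Icc n hy).1
          simp only [] at hyx
          linarith
      exact Or.inl ⟨3 * x, Set.mem_iInter.mpr key, by ring⟩
    · have key : ∀ n, 3 * x - 2 ∈ preCantorSet n := by
        intro n
        rcases hx' (n+1) with ⟨y, hy, hyx⟩ | ⟨y, hy, hyx⟩
        · have h1 := (preCantorSet_subset_Icc n hy).2
          simp only [] at hyx
          linarith
        · simp only [] at hyx
          have : 3 * x - 2 = y := by linarith
          rwa [this]
      exact Or.inr ⟨3 * x - 2, Set.mem_iInter.mpr key, by ring⟩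
  · rintro (⟨y, hy, rfl⟩ | ⟨y, hy, rfl⟩) <;> apply Set.mem_iInter.mpr <;> intro n
    · cases n with
      | zero =>
        obtain ⟨h0, h1⟩ := cantorSet_subset_unitInterval hy
        constructor <;> simp only [] <;> linarith
      | succ n => exact Or.inl ⟨y, Set.mem_iInter.mp hy n, rfl⟩
    · cases n with
      | zero =>
        obtain ⟨h0, h1⟩ := cantorSet_subset_unitInterval hy
        constructor <;> simp only [] <;> linarith
      | succ n => exact Or.inr ⟨y, Set.mem_iInter.mp hy n, rfl⟩

lemma cantor_approx (n : ℕ) : ∀ x ∈ cantorSet, ∃ y ∈ cantorSet, y ≠ x ∧ |x - y| ≤ (1/3:ℝ)^n := by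
  induction n with
  | zero =>
    intro x hx
    obtain ⟨h0, h1⟩ := cantorSet_subset_unitInterval hx
    by_cases h : x = 0
    · refine ⟨1/4, quarter_mem_cantorSet, by norm_num [h], ?_⟩
      rw [h]; rw [abs_of_nonpos (by norm_num)]; norm_num
    · refine ⟨0, zero_mem_cantorSet, fun h0' => h h0'.symm, ?_⟩
      rw [sub_zero, abs_of_nonneg h0]; simpa using h1
  | succ n ih =>
    intro x hx
    rw [cantorSet_eq] at hx
    rcases hx with ⟨y, hy, rfl⟩ | ⟨y, hy, rfl⟩
    · obtain ⟨z, hz, hzy, hd⟩ := ih y hy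
      refine ⟨z / 3, by rw [cantorSet_eq]; exact Or.inl ⟨z, hz, rfl⟩, ?_, ?_⟩
      · intro h; exact hzy (by field_simp at h; linarith)
      · have : y / 3 - z / 3 = (y - z) / 3 := by ring
        rw [this, abs_div, abs_of_pos (by norm_num : (0:ℝ) < 3), pow_succ]
        calc |y - z| / 3 ≤ (1/3)^n / 3 := by
              apply div_le_div_of_nonneg_right hd (by norm_num) |>.trans_eq rfl
          _ = (1/3)^n * (1/3) := by ring
    · obtain ⟨z, hz, hzy, hd⟩ := ih y hy
      refine ⟨(2 + z) / 3, by rw [cantorSet_eq]; exact Or.inr ⟨z, hz, rfl⟩, ?_, ?_⟩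
      · intro h; exact hzy (by field_simp at h; linarith)
      · have : (2 + y) / 3 - (2 + z) / 3 = (y - z) / 3 := by ring
        rw [this, abs_div, abs_of_pos (by norm_num : (0:ℝ) < 3), pow_succ]
        calc |y - z| / 3 ≤ (1/3)^n / 3 := by
              apply div_le_div_of_nonneg_right hd (by norm_num) |>.trans_eq rfl
          _ = (1/3)^n * (1/3) := by ring

lemma cantor_nearby : ∀ x ∈ cantorSet, ∀ ε : ℝ, 0 < ε →
    ∃ y ∈ cantorSet, y ≠ x ∧ |x - y| < ε := by
  intro x hx ε hε
  obtain ⟨n, hn⟩ := exists_pow_lt_of_lt_one hε (by norm_num : (1/3:ℝ) < 1)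
  obtain ⟨y, hy, hyx, hd⟩ := cantor_approx n x hx
  exact ⟨y, hy, hyx, lt_of_le_of_lt hd hn⟩

lemma cantor_interval (n : ℕ) : ∀ a b : ℝ, Set.Icc a b ⊆ preCantorSet n → b - a ≤ (1/3:ℝ)^n := by
  induction n with
  | zero =>
    intro a b hab
    by_cases h : a ≤ b
    · have h1 := (hab (Set.left_mem_Icc.mpr h)).1
      have h2 := (hab (Set.right_mem_Icc.mpr h)).2
      simpa using by linarith
    · push_neg at h; simpa using by linarith
  | succ n ih =>
    intro a b hab
    by_cases h : a ≤ b
    · have ha := hab (Set.left_mem_Icc.mpr h)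
      have hpow : (0:ℝ) < (1/3)^n := by positivity
      rcases ha with ⟨y, hy, hya⟩ | ⟨y, hy, hya⟩
      · -- a = y/3 ≤ 1/3
        have ha3 : a ≤ 1/3 := by
          have := (preCantorSet_subset_Icc n hy).2; simp only [] at hya; linarith
        have hb3 : b ≤ 1/3 := by
          by_contra hb
          push_neg at hb
          have hc : min b (1/2) ∈ Set.Icc a b :=
            ⟨le_min (by linarith) (by linarith), min_le_left _ _⟩
          rcases hab hc with ⟨z, hz, hzc⟩ | ⟨z, hz, hzc⟩
          · have := (preCantorSet_subset_Icc n hz).2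
            have : min b (1/2) ≤ 1/3 := by simp only [] at hzc; linarith
            rcases le_or_gt b (1/2) with hb2 | hb2
            · rw [min_eq_left hb2] at this; linarith
            · rw [min_eq_right hb2.le] at this; linarith
          · have := (preCantorSet_subset_Icc n hz).1
            have : (2:ℝ)/3 ≤ min b (1/2) := by simp only [] at hzc; linarith
            have := this.trans (min_le_right _ _); linarith
        have key : Set.Icc (3*a) (3*b) ⊆ preCantorSet n := by
          intro x ⟨hx1, hx2⟩
          have hx3 : x / 3 ∈ Set.Icc a b := ⟨by linarith, by linarith⟩
          rcases hab hx3 with ⟨z, hz, hzc⟩ | ⟨z, hz, hzc⟩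
          · simp only [] at hzc
            have : z = x := by linarith
            rwa [← this]
          · have := (preCantorSet_subset_Icc n hz).1
            simp only [] at hzc
            linarith
        have := ih (3*a) (3*b) key
        rw [pow_succ]
        linarith
      · -- a = (2+y)/3 ≥ 2/3
        have ha3 : (2:ℝ)/3 ≤ a := by
          have := (preCantorSet_subset_Icc n hy).1; simp only [] at hya; linarith
        have key : Set.Icc (3*a - 2) (3*b - 2) ⊆ preCantorSet n := by
          intro x ⟨hx1, hx2⟩
          have hx3 : (2 + x) / 3 ∈ Set.Icc a b := ⟨by linarith, by linarith⟩
          rcases hab hx3 with ⟨z, hz, hzc⟩ | ⟨z, hz, hzc⟩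
          · have := (preCantorSet_subset_Icc n hz).2
            simp only [] at hzc
            linarith
          · simp only [] at hzc
            have : z = x := by linarith
            rwa [← this]
        have := ih _ _ key
        rw [pow_succ]
        linarith
    · push_neg at h
      have : (0:ℝ) < (1/3)^(n+1) := by positivity
      linarith

lemma cantor_gap : ∀ a b : ℝ, a < b → ∃ c, a < c ∧ c < b ∧ c ∉ cantorSet := by
  intro a b hab
  by_contra hcon
  push_neg at hcon
  set d := b - a with hd
  have hd0 : 0 < d := by simp [hd]; linarith
  have hsub : Set.Icc (a + d/4) (b - d/4) ⊆ cantorSet := by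
    intro x ⟨h1, h2⟩
    exact hcon x (by linarith) (by linarith)
  obtain ⟨n, hn⟩ := exists_pow_lt_of_lt_one (show (0:ℝ) < d/2 by linarith)
    (by norm_num : (1/3:ℝ) < 1)
  have := cantor_interval n (a + d/4) (b - d/4)
    (fun x hx => Set.mem_iInter.mp (hsub hx) n)
  have : b - d/4 - (a + d/4) = d/2 := by ring
  linarith [cantor_interval n (a + d/4) (b - d/4)
    (fun x hx => Set.mem_iInter.mp (hsub hx) n)]

open Set Metric Filter

local notation "E" N => EuclideanSpace ℝ (Fin N)

section Helpers
variable {N : ℕ}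

lemma coord_dist_le (x y : E N) (i : Fin N) : |x i - y i| ≤ dist x y := by
  rw [EuclideanSpace.dist_eq]
  rw [← Real.dist_eq]
  have h1 : dist (x i) (y i) = Real.sqrt (dist (x i) (y i) ^ 2) :=
    (Real.sqrt_sq dist_nonneg).symm
  rw [h1]
  apply Real.sqrt_le_sqrt
  exact Finset.single_le_sum (f := fun j => dist (x j) (y j) ^ 2)
    (fun j _ => sq_nonneg _) (Finset.mem_univ i)

lemma dist_le_of_coord {x y : E N} {m : ℝ} (hm : 0 ≤ m)
    (h : ∀ i, |x i - y i| ≤ m) : dist x y ≤ N * m := by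
  rw [EuclideanSpace.dist_eq]
  have h1 : ∑ i, dist (x i) (y i) ^ 2 ≤ (N : ℝ) * m ^ 2 := by
    calc ∑ i, dist (x i) (y i) ^ 2 ≤ ∑ _i : Fin N, m ^ 2 := by
          apply Finset.sum_le_sum
          intro i _
          rw [Real.dist_eq]
          exact pow_le_pow_left₀ (abs_nonneg _) (h i) 2
        _ = (N : ℝ) * m ^ 2 := by simp [Finset.sum_const, Finset.card_univ, nsmul_eq_mul]
  have h2 : (N : ℝ) * m ^ 2 ≤ ((N : ℝ) * m) ^ 2 := by
    have hN : (N : ℝ) ≤ (N:ℝ)^2 := by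
      rcases Nat.eq_zero_or_pos N with h0 | h0
      · simp [h0]
      · have : (1:ℝ) ≤ N := by exact_mod_cast h0
        nlinarith
    nlinarith [sq_nonneg m]
  calc Real.sqrt (∑ i, dist (x i) (y i) ^ 2) ≤ Real.sqrt (((N:ℝ) * m) ^ 2) :=
        Real.sqrt_le_sqrt (h1.trans h2)
    _ = (N : ℝ) * m := Real.sqrt_sq (by positivity)

end Helpers

section Cube
variable {N : ℕ}

/-- A scaled translated Cantor cube. -/
def cube (g : E N) (r : ℝ) : Set (E N) :=
  {v | ∀ i, ∃ c ∈ cantorSet, v i = g i + r * c}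

lemma self_mem_cube (g : E N) (r : ℝ) : g ∈ cube g r :=
  fun _ => ⟨0, zero_mem_cantorSet, by simp⟩

lemma cube_coord {g : E N} {r : ℝ} (hr : 0 < r) {v : E N} (hv : v ∈ cube g r) (i : Fin N) :
    |v i - g i| ≤ r := by
  obtain ⟨c, hc, hvc⟩ := hv i
  obtain ⟨h0, h1⟩ := cantorSet_subset_unitInterval hc
  rw [hvc]
  rw [abs_of_nonneg (by nlinarith)]
  nlinarith

lemma cube_subset_closedBall {g : E N} {r : ℝ} (hr : 0 < r) :
    cube g r ⊆ Metric.closedBall g (N * r) := by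
  intro v hv
  rw [Metric.mem_closedBall]
  exact dist_le_of_coord hr.le (fun i => cube_coord hr hv i)

lemma isClosed_cube (g : E N) (r : ℝ) : IsClosed (cube g r) := by
  have : cube g r = ⋂ i, (fun v : E N => v i) ⁻¹' ((fun c => g i + r * c) '' cantorSet) := by
    ext v
    simp only [cube, Set.mem_setOf_eq, Set.mem_iInter, Set.mem_preimage, Set.mem_image]
    constructor
    · intro h i; obtain ⟨c, hc, hvc⟩ := h i; exact ⟨c, hc, hvc.symm⟩
    · intro h i; obtain ⟨c, hc, hvc⟩ := h i; exact ⟨c, hc, hvc.symm⟩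
  rw [this]
  apply isClosed_iInter
  intro i
  apply IsClosed.preimage
  · exact (PiLp.continuous_apply 2 _ i)
  · exact (isCompact_cantorSet.image (by fun_prop)).isClosed

lemma isCompact_cube (g : E N) {r : ℝ} (hr : 0 < r) : IsCompact (cube g r) :=
  Metric.isCompact_of_isClosed_isBounded (isClosed_cube g r)
    (Metric.isBounded_closedBall.subset (cube_subset_closedBall hr))

lemma cube_perturb {g : E N} {r : ℝ} (hr : 0 < r) {v : E N} (hv : v ∈ cube g r)
    {ε : ℝ} (hε : 0 < ε) (i₀ : Fin N) :
    ∃ a : ℝ, a ≠ 0 ∧ |a| < ε ∧ v + a • (EuclideanSpace.single i₀ (1:ℝ)) ∈ cube g r := by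
  obtain ⟨c, hc, hvc⟩ := hv i₀
  obtain ⟨c₂, hc₂, hc₂c, hd⟩ := cantor_nearby c hc (ε / r) (by positivity)
  refine ⟨r * (c₂ - c), by
    intro h
    have : c₂ = c := by
      have := mul_eq_zero.mp h
      rcases this with h | h
      · exact absurd h hr.ne'
      · linarith [sub_eq_zero.mp h]
    exact hc₂c this, ?_, ?_⟩
  · rw [abs_mul, abs_of_pos hr, abs_sub_comm]
    calc r * |c - c₂| < r * (ε / r) := by
          apply mul_lt_mul_of_pos_left hd hr
      _ = ε := by field_simp
  · intro i
    by_cases h : i = i₀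
    · subst h
      refine ⟨c₂, hc₂, ?_⟩
      have : (v + (r * (c₂ - c)) • EuclideanSpace.single i (1:ℝ)) i
          = v i + (r * (c₂ - c)) * (EuclideanSpace.single i (1:ℝ)) i := by
        simp [PiLp.add_apply, PiLp.smul_apply, smul_eq_mul]
      rw [this, EuclideanSpace.single_apply, if_pos rfl, hvc]; ring
    · obtain ⟨c', hc', hvc'⟩ := hv i
      refine ⟨c', hc', ?_⟩
      have : (v + (r * (c₂ - c)) • EuclideanSpace.single i₀ (1:ℝ)) i
          = v i + (r * (c₂ - c)) * (EuclideanSpace.single i₀ (1:ℝ)) i := by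
        simp [PiLp.add_apply, PiLp.smul_apply, smul_eq_mul]
      rw [this, EuclideanSpace.single_apply]
      simp only [if_neg h]
      rw [hvc']; ring

lemma perfect_cube (hN : 1 ≤ N) (g : E N) {r : ℝ} (hr : 0 < r) : Perfect (cube g r) := by
  constructor
  · exact isClosed_cube g r
  · intro v hv
    rw [accPt_iff_nhds]
    intro U hU
    obtain ⟨ε, hε, hball⟩ := Metric.mem_nhds_iff.mp hU
    have i₀ : Fin N := ⟨0, hN⟩
    obtain ⟨a, ha, haε, hmem⟩ := cube_perturb hr hv hε i₀
    refine ⟨v + a • EuclideanSpace.single i₀ (1:ℝ), ⟨hball ?_, hmem⟩, ?_⟩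
    · rw [Metric.mem_ball, dist_eq_norm]
      simp only [add_sub_cancel_left]
      rw [norm_smul, EuclideanSpace.norm_single]
      simpa using haε
    · intro h
      apply ha
      have := congrArg (· i₀) h
      simp only [PiLp.add_apply, PiLp.smul_apply, smul_eq_mul,
        EuclideanSpace.single_apply, if_pos rfl, if_true, mul_one] at this
      linarith

lemma td_cube (g : E N) {r : ℝ} (hr : 0 < r) : IsTotallyDisconnected (cube g r) := by
  apply isTotallyDisconnected_of_isTotallySeparated
  intro x hx y hy hxy
  have : ∃ i, x i ≠ y i := by
    by_contra h
    push_neg at h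
    exact hxy (PiLp.ext h)
  obtain ⟨i, hi⟩ := this
  obtain ⟨cx, hcx, hxc⟩ := hx i
  obtain ⟨cy, hcy, hyc⟩ := hy i
  have hcont : Continuous fun v : E N => v i := PiLp.continuous_apply 2 _ i
  -- wlog cx < cy
  rcases lt_trichotomy (x i) (y i) with hlt | heq | hlt
  · have hcxy : cx < cy := by nlinarith [hxc, hyc]
    obtain ⟨c, hc1, hc2, hcn⟩ := cantor_gap cx cy hcxy
    set t := g i + r * c with ht
    refine ⟨{v : E N | v i < t}, {v : E N | t < v i}, ?_, ?_, ?_, ?_, ?_, ?_⟩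
    · exact isOpen_lt hcont continuous_const
    · exact isOpen_lt continuous_const hcont
    · simp only [Set.mem_setOf_eq]; rw [hxc]; nlinarith
    · simp only [Set.mem_setOf_eq]; rw [hyc]; nlinarith
    · intro v hv
      obtain ⟨cv, hcv, hvc⟩ := hv i
      have : cv ≠ c := fun h => hcn (h ▸ hcv)
      rcases lt_or_gt_of_ne this with h | h
      · left; simp only [Set.mem_setOf_eq]; rw [hvc]; nlinarith
      · right; simp only [Set.mem_setOf_eq]; rw [hvc]; nlinarith
    · rw [Set.disjoint_iff]
      rintro v ⟨h1, h2⟩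
      simp only [Set.mem_setOf_eq] at h1 h2
      linarith
  · exact absurd heq hi
  · have hcxy : cy < cx := by nlinarith [hxc, hyc]
    obtain ⟨c, hc1, hc2, hcn⟩ := cantor_gap cy cx hcxy
    set t := g i + r * c with ht
    refine ⟨{v : E N | t < v i}, {v : E N | v i < t}, ?_, ?_, ?_, ?_, ?_, ?_⟩
    · exact isOpen_lt continuous_const hcont
    · exact isOpen_lt hcont continuous_const
    · simp only [Set.mem_setOf_eq]; rw [hxc]; nlinarith
    · simp only [Set.mem_setOf_eq]; rw [hyc]; nlinarith
    · intro v hv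
      obtain ⟨cv, hcv, hvc⟩ := hv i
      have : cv ≠ c := fun h => hcn (h ▸ hcv)
      rcases lt_or_gt_of_ne this with h | h
      · right; simp only [Set.mem_setOf_eq]; rw [hvc]; nlinarith
      · left; simp only [Set.mem_setOf_eq]; rw [hvc]; nlinarith
    · rw [Set.disjoint_iff]
      rintro v ⟨h1, h2⟩
      simp only [Set.mem_setOf_eq] at h1 h2
      linarith

end Cube

section Union
variable {α : Type*} [MetricSpace α]

open Set Metric

lemma td_union_of_separated {A B : Set α} (hA : IsTotallyDisconnected A)
    (hB : IsTotallyDisconnected B) {d : ℝ} (hd : 0 < d)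
    (hsep : ∀ a ∈ A, ∀ b ∈ B, d ≤ dist a b) : IsTotallyDisconnected (A ∪ B) := by
  intro t hsub hconn
  by_cases hB' : (t ∩ B).Nonempty
  · by_cases hA' : (t ∩ A).Nonempty
    · exfalso
      set U : Set α := ⋃ a ∈ A, Metric.ball a (d/2) with hU
      set V : Set α := ⋃ b ∈ B, Metric.ball b (d/2) with hV
      have hUopen : IsOpen U := isOpen_biUnion fun _ _ => Metric.isOpen_ball
      have hVopen : IsOpen V := isOpen_biUnion fun _ _ => Metric.isOpen_ball
      have hcover : t ⊆ U ∪ V := by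
        intro x hx
        rcases hsub hx with hxA | hxB
        · exact Or.inl (Set.mem_biUnion hxA (Metric.mem_ball_self (by linarith)))
        · exact Or.inr (Set.mem_biUnion hxB (Metric.mem_ball_self (by linarith)))
      have hUt : (t ∩ U).Nonempty := by
        obtain ⟨x, hxt, hxA⟩ := hA'
        exact ⟨x, hxt, Set.mem_biUnion hxA (Metric.mem_ball_self (by linarith))⟩
      have hVt : (t ∩ V).Nonempty := by
        obtain ⟨x, hxt, hxB⟩ := hB'
        exact ⟨x, hxt, Set.mem_biUnion hxB (Metric.mem_ball_self (by linarith))⟩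
      obtain ⟨x, _, hxU, hxV⟩ := hconn U V hUopen hVopen hcover hUt hVt
      obtain ⟨a, haA, hxa⟩ := Set.mem_iUnion₂.mp hxU
      obtain ⟨b, hbB, hxb⟩ := Set.mem_iUnion₂.mp hxV
      have := hsep a haA b hbB
      rw [Metric.mem_ball] at hxa hxb
      have : dist a b < d := by
        calc dist a b ≤ dist a x + dist x b := dist_triangle _ _ _
          _ < d/2 + d/2 := by rw [dist_comm a x]; exact add_lt_add hxa hxb
          _ = d := by ring
      linarith [hsep a haA b hbB]
    · -- t ∩ A = ∅, so t ⊆ B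
      apply hB _ (fun x hx => ?_) hconn
      rcases hsub hx with hxA | hxB
      · exact absurd ⟨x, hx, hxA⟩ hA'
      · exact hxB
  · apply hA _ (fun x hx => ?_) hconn
    rcases hsub hx with hxA | hxB
    · exact hxA
    · exact absurd ⟨x, hx, hxB⟩ hB'

lemma td_biUnion_of_separated {ι : Type*} (S : Finset ι) (f : ι → Set α) {d : ℝ} (hd : 0 < d)
    (htd : ∀ i ∈ S, IsTotallyDisconnected (f i))
    (hsep : ∀ i ∈ S, ∀ j ∈ S, i ≠ j → ∀ a ∈ f i, ∀ b ∈ f j, d ≤ dist a b) :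
    IsTotallyDisconnected (⋃ i ∈ S, f i) := by
  classical
  induction S using Finset.induction with
  | empty => simp [isTotallyDisconnected_empty]
  | @insert i s hni ih =>
    rw [Finset.set_biUnion_insert]
    apply td_union_of_separated (htd i (Finset.mem_insert_self i s)) ?_ hd
    · intro a ha b hb
      obtain ⟨j, hj, hbj⟩ := Set.mem_iUnion₂.mp hb
      exact hsep i (Finset.mem_insert_self i s) j (Finset.mem_insert_of_mem hj)
        (fun h => hni (h ▸ hj)) a ha b hbj
    · exact ih (fun j hj => htd j (Finset.mem_insert_of_mem hj))
        (fun j hj k hk hjk => hsep j (Finset.mem_insert_of_mem hj) k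
          (Finset.mem_insert_of_mem hk) hjk)

lemma perfect_biUnion {ι : Type*} (S : Finset ι) (f : ι → Set α)
    (hf : ∀ i ∈ S, Perfect (f i)) : Perfect (⋃ i ∈ S, f i) := by
  constructor
  · exact Set.Finite.isClosed_biUnion S.finite_toSet (fun i hi => (hf i hi).closed)
  · intro x hx
    obtain ⟨i, hi, hxi⟩ := Set.mem_iUnion₂.mp hx
    exact AccPt.mono ((hf i hi).acc x hxi)
      (Filter.principal_mono.mpr (Set.subset_biUnion_of_mem hi))

end Union

section Proj
variable {N : ℕ}

open Set Metric Filter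

/-- Orthogonal projection as a continuous linear endomorphism. -/
noncomputable def PL (L : Submodule ℝ (E N)) : (E N) →L[ℝ] (E N) :=
  L.subtypeL.comp L.orthogonalProjectionOnto

lemma proj_eq_PL (L : Submodule ℝ (E N)) : proj L = ⇑(PL L) := rfl

lemma PL_apply_mem (L : Submodule ℝ (E N)) (x : E N) : PL L x ∈ L :=
  (L.orthogonalProjectionOnto x).2

lemma PL_of_mem (L : Submodule ℝ (E N)) {x : E N} (hx : x ∈ L) : PL L x = x :=
  Submodule.starProjection_eq_self_iff.mpr hx

lemma PL_norm_apply_le (L : Submodule ℝ (E N)) (x : E N) : ‖PL L x‖ ≤ ‖x‖ := by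
  have h1 : ‖PL L x‖ = ‖L.orthogonalProjectionOnto x‖ := rfl
  rw [h1]
  calc ‖L.orthogonalProjectionOnto x‖ ≤ ‖L.orthogonalProjectionOnto‖ * ‖x‖ :=
        (L.orthogonalProjectionOnto).le_opNorm x
    _ ≤ 1 * ‖x‖ := by
        apply mul_le_mul_of_nonneg_right (Submodule.orthogonalProjectionOnto_norm_le _) (norm_nonneg _)
    _ = ‖x‖ := one_mul _

lemma PL_norm_le (L : Submodule ℝ (E N)) : ‖PL L‖ ≤ 1 :=
  ContinuousLinearMap.opNorm_le_bound _ zero_le_one (fun x => by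
    rw [one_mul]; exact PL_norm_apply_le L x)

lemma PL_selfadj (L : Submodule ℝ (E N)) (x y : E N) :
    inner ℝ (PL L x) y = (inner ℝ x (PL L y) : ℝ) :=
  Submodule.inner_starProjection_left_eq_right L x y

lemma PL_idem (L : Submodule ℝ (E N)) (x : E N) : PL L (PL L x) = PL L x :=
  PL_of_mem L (PL_apply_mem L x)

/-- The set of orthogonal projections onto non-trivial subspaces. -/
def ProjSet (N : ℕ) : Set ((E N) →L[ℝ] (E N)) :=
  {P | ∃ L : Submodule ℝ (E N), L ≠ ⊥ ∧ P = PL L}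

lemma ProjSet_limit {P : ℕ → (E N) →L[ℝ] (E N)} (hP : ∀ k, P k ∈ ProjSet N)
    {Q : (E N) →L[ℝ] (E N)} (hQ : Filter.Tendsto P Filter.atTop (nhds Q)) :
    Q ∈ ProjSet N := by
  -- pointwise convergence
  have hpt : ∀ x : E N, Filter.Tendsto (fun k => P k x) Filter.atTop (nhds (Q x)) := by
    intro x
    have : Continuous fun T : (E N) →L[ℝ] (E N) => T x :=
      (isBoundedBilinearMap_apply.continuous).comp (Continuous.prodMk continuous_id
        continuous_const)
    exact (this.tendsto Q).comp hQ
  -- self-adjointness of Q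
  have hsa : ∀ x y : E N, inner ℝ (Q x) y = (inner ℝ x (Q y) : ℝ) := by
    intro x y
    have h1 : Filter.Tendsto (fun k => (inner ℝ (P k x) y : ℝ)) Filter.atTop (nhds (inner ℝ (Q x) y)) :=
      Filter.Tendsto.inner (hpt x) tendsto_const_nhds
    have h2 : Filter.Tendsto (fun k => (inner ℝ x (P k y) : ℝ)) Filter.atTop (nhds (inner ℝ x (Q y))) :=
      Filter.Tendsto.inner tendsto_const_nhds (hpt y)
    have heq : ∀ k, (inner ℝ (P k x) y : ℝ) = inner ℝ x (P k y) := by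
      intro k
      obtain ⟨L, _, hL⟩ := hP k
      rw [hL]; exact PL_selfadj L x y
    exact tendsto_nhds_unique (by simpa only [heq] using h1) h2
  -- idempotence of Q
  have hid : ∀ x : E N, Q (Q x) = Q x := by
    intro x
    have happ : Continuous fun p : ((E N) →L[ℝ] (E N)) × (E N) => p.1 p.2 :=
      isBoundedBilinearMap_apply.continuous
    have h1 : Filter.Tendsto (fun k => P k (P k x)) Filter.atTop (nhds (Q (Q x))) := by
      have := (happ.tendsto (Q, Q x)).comp (Filter.Tendsto.prodMk_nhds hQ (hpt x))
      exact this
    have heq : ∀ k, P k (P k x) = P k x := by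
      intro k
      obtain ⟨L, _, hL⟩ := hP k
      rw [hL]; exact PL_idem L x
    exact tendsto_nhds_unique (by simpa only [heq] using h1) (hpt x)
  -- a unit fixed vector
  obtain ⟨u, hu_sphere, hufix⟩ : ∃ u : E N, u ∈ Metric.sphere (0 : E N) 1 ∧ Q u = u := by
    have hvk : ∀ k, ∃ v : E N, v ∈ Metric.sphere (0 : E N) 1 ∧ P k v = v := by
      intro k
      obtain ⟨L, hL, hPL⟩ := hP k
      obtain ⟨v, hvL, hv0⟩ := Submodule.exists_mem_ne_zero_of_ne_bot hL
      refine ⟨‖v‖⁻¹ • v, ?_, ?_⟩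
      · rw [mem_sphere_zero_iff_norm, norm_smul, norm_inv, norm_norm,
          inv_mul_cancel₀ (norm_ne_zero_iff.mpr hv0)]
      · rw [hPL]
        exact PL_of_mem L (L.smul_mem _ hvL)
    choose v hv hvfix using hvk
    obtain ⟨u, hu, φ, hφ, hconv⟩ := (isCompact_sphere (0 : E N) 1).tendsto_subseq hv
    refine ⟨u, hu, ?_⟩
    have happ : Continuous fun p : ((E N) →L[ℝ] (E N)) × (E N) => p.1 p.2 :=
      isBoundedBilinearMap_apply.continuous
    have h1 : Filter.Tendsto (fun k => P (φ k) (v (φ k))) Filter.atTop (nhds (Q u)) :=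
      (happ.tendsto (Q, u)).comp (Filter.Tendsto.prodMk_nhds
        (hQ.comp (hφ.tendsto_atTop)) hconv)
    have h2 : Filter.Tendsto (fun k => v (φ k)) Filter.atTop (nhds u) := hconv
    exact tendsto_nhds_unique (by simpa only [hvfix] using h1) h2
  have hu0 : u ≠ 0 := by
    intro h
    rw [h] at hu_sphere
    simp at hu_sphere
  refine ⟨LinearMap.range (Q : (E N) →ₗ[ℝ] (E N)), ?_, ?_⟩
  · intro h
    have : u ∈ LinearMap.range (Q : (E N) →ₗ[ℝ] (E N)) := ⟨u, hufix⟩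
    rw [h] at this
    exact hu0 (Submodule.mem_bot ℝ |>.mp this)
  · refine ContinuousLinearMap.ext fun x => ?_
    have hmem : Q x ∈ LinearMap.range (Q : (E N) →ₗ[ℝ] (E N)) := ⟨x, rfl⟩
    have horth : ∀ w ∈ LinearMap.range (Q : (E N) →ₗ[ℝ] (E N)), (inner ℝ (x - Q x) w : ℝ) = 0 := by
      rintro w ⟨z, rfl⟩
      rw [show (Q : (E N) →ₗ[ℝ] (E N)) z = Q z from rfl, ← hsa (x - Q x) z]
      have : Q (x - Q x) = 0 := by rw [map_sub, hid, sub_self]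
      rw [this, inner_zero_left]
    have := Submodule.eq_starProjection_of_mem_of_inner_eq_zero hmem horth
    show Q x = PL (LinearMap.range (Q : (E N) →ₗ[ℝ] (E N))) x
    rw [show PL (LinearMap.range (Q : (E N) →ₗ[ℝ] (E N))) x = (LinearMap.range (Q : (E N) →ₗ[ℝ] (E N))).starProjection x from rfl,
      this]

end Proj

section Closed
open Set Metric Filter TopologicalSpace

variable {N : ℕ}

lemma edist_ne_top' (A B : NonemptyCompacts (EuclideanSpace ℝ (Fin N))) :
    EMetric.hausdorffEdist (A : Set (EuclideanSpace ℝ (Fin N))) B ≠ ⊤ :=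
  Metric.hausdorffEdist_ne_top_of_nonempty_of_bounded A.nonempty B.nonempty
    A.isCompact.isBounded B.isCompact.isBounded

lemma uniform_container {T : ℕ → NonemptyCompacts (EuclideanSpace ℝ (Fin N))}
    {K : NonemptyCompacts (EuclideanSpace ℝ (Fin N))}
    (h : Filter.Tendsto T Filter.atTop (nhds K)) :
    ∃ R : ℝ, 0 < R ∧ (K : Set (EuclideanSpace ℝ (Fin N))) ⊆ Metric.closedBall 0 R ∧
      ∀ k, (T k : Set (EuclideanSpace ℝ (Fin N))) ⊆ Metric.closedBall 0 R := by
  obtain ⟨R₀, hR₀⟩ := K.isCompact.isBounded.subset_closedBall 0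
  have hdist : Filter.Tendsto (fun k => dist (T k) K) Filter.atTop (nhds 0) :=
    tendsto_iff_dist_tendsto_zero.mp h
  obtain ⟨D, hD⟩ := hdist.bddAbove_range
  have hDk : ∀ k, dist (T k) K ≤ D := fun k => hD (Set.mem_range_self k)
  have hD0 : 0 ≤ D := le_trans dist_nonneg (hDk 0)
  refine ⟨max R₀ 0 + D + 1, by positivity, ?_, ?_⟩
  · apply hR₀.trans
    apply Metric.closedBall_subset_closedBall
    have : R₀ ≤ max R₀ 0 := le_max_left _ _
    linarith
  · intro k a ha
    have h1 : Metric.infDist a (K : Set (EuclideanSpace ℝ (Fin N))) < D + 1 := by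
      calc Metric.infDist a (K : Set (EuclideanSpace ℝ (Fin N)))
          ≤ Metric.hausdorffDist (T k : Set (EuclideanSpace ℝ (Fin N))) K :=
            Metric.infDist_le_hausdorffDist_of_mem ha (edist_ne_top' _ _)
        _ = dist (T k) K := rfl
        _ ≤ D := hDk k
        _ < D + 1 := by linarith
    obtain ⟨w, hwK, hw⟩ := (Metric.infDist_lt_iff K.nonempty).mp h1
    have hw0 : dist w 0 ≤ max R₀ 0 := by
      have := hR₀ hwK
      rw [Metric.mem_closedBall] at this
      exact this.trans (le_max_left _ _)
    rw [Metric.mem_closedBall]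
    calc dist a 0 ≤ dist a w + dist w 0 := dist_triangle _ _ _
      _ ≤ (D + 1) + max R₀ 0 := add_le_add hw.le hw0
      _ = max R₀ 0 + D + 1 := by ring

lemma approach_mem {T : ℕ → NonemptyCompacts (EuclideanSpace ℝ (Fin N))}
    {K : NonemptyCompacts (EuclideanSpace ℝ (Fin N))}
    (h : Filter.Tendsto T Filter.atTop (nhds K))
    {x : EuclideanSpace ℝ (Fin N)} (hx : x ∈ (K : Set (EuclideanSpace ℝ (Fin N)))) :
    ∃ u : ℕ → EuclideanSpace ℝ (Fin N),
      (∀ k, u k ∈ (T k : Set (EuclideanSpace ℝ (Fin N)))) ∧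
      Filter.Tendsto u Filter.atTop (nhds x) := by
  have hch : ∀ k, ∃ y ∈ (T k : Set (EuclideanSpace ℝ (Fin N))),
      Metric.infDist x (T k : Set (EuclideanSpace ℝ (Fin N))) = dist x y :=
    fun k => (T k).isCompact.exists_infDist_eq_dist (T k).nonempty x
  choose u hu hud using hch
  refine ⟨u, hu, ?_⟩
  rw [tendsto_iff_dist_tendsto_zero]
  have hb : ∀ k, dist (u k) x ≤ dist (T k) K := by
    intro k
    rw [dist_comm, ← hud k]
    calc Metric.infDist x (T k : Set (EuclideanSpace ℝ (Fin N)))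
        ≤ Metric.hausdorffDist (K : Set (EuclideanSpace ℝ (Fin N))) (T k) :=
          Metric.infDist_le_hausdorffDist_of_mem hx (edist_ne_top' _ _)
      _ = dist K (T k) := rfl
      _ = dist (T k) K := dist_comm _ _
  have h0 : Filter.Tendsto (fun k => dist (T k) K) Filter.atTop (nhds 0) :=
    tendsto_iff_dist_tendsto_zero.mp h
  exact squeeze_zero (fun k => dist_nonneg) hb h0

lemma limit_mem {T : ℕ → NonemptyCompacts (EuclideanSpace ℝ (Fin N))}
    {K : NonemptyCompacts (EuclideanSpace ℝ (Fin N))}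
    (h : Filter.Tendsto T Filter.atTop (nhds K))
    {u : ℕ → EuclideanSpace ℝ (Fin N)}
    (hu : ∀ k, u k ∈ (T k : Set (EuclideanSpace ℝ (Fin N))))
    {x : EuclideanSpace ℝ (Fin N)} (hx : Filter.Tendsto u Filter.atTop (nhds x)) :
    x ∈ (K : Set (EuclideanSpace ℝ (Fin N))) := by
  have hb : ∀ k, Metric.infDist x (K : Set (EuclideanSpace ℝ (Fin N)))
      ≤ dist x (u k) + dist (T k) K := by
    intro k
    calc Metric.infDist x (K : Set (EuclideanSpace ℝ (Fin N)))
        ≤ Metric.infDist (u k) (K : Set (EuclideanSpace ℝ (Fin N))) + dist x (u k) :=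
          Metric.infDist_le_infDist_add_dist
      _ ≤ Metric.hausdorffDist (T k : Set (EuclideanSpace ℝ (Fin N))) K + dist x (u k) :=
          add_le_add_left (Metric.infDist_le_hausdorffDist_of_mem (hu k) (edist_ne_top' _ _)) _
      _ = dist x (u k) + dist (T k) K := by rw [add_comm]; rfl
  have h1 : Filter.Tendsto (fun k => dist x (u k) + dist (T k) K) Filter.atTop (nhds 0) := by
    have ha : Filter.Tendsto (fun k => dist x (u k)) Filter.atTop (nhds 0) := by
      have := tendsto_iff_dist_tendsto_zero.mp hx
      simpa [dist_comm] using this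
    have hb' := tendsto_iff_dist_tendsto_zero.mp h
    simpa using ha.add hb'
  have h2 : Metric.infDist x (K : Set (EuclideanSpace ℝ (Fin N))) ≤ 0 :=
    ge_of_tendsto h1 (Filter.Eventually.of_forall hb)
  exact (K.isCompact.isClosed.mem_iff_infDist_zero K.nonempty).mpr
    (le_antisymm h2 Metric.infDist_nonneg)

/-- The closed pieces of the exceptional set. -/
def Fset (N : ℕ) (n : ℕ) : Set (CantorSets N) :=
  {X | ∃ P ∈ ProjSet N, ∃ y z : EuclideanSpace ℝ (Fin N),
    y ∈ ⇑P '' (X.1 : Set (EuclideanSpace ℝ (Fin N))) ∧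
    z ∈ ⇑P '' (X.1 : Set (EuclideanSpace ℝ (Fin N))) ∧
    1/(n+1 : ℝ) ≤ dist y z ∧
    (⇑P '' (X.1 : Set (EuclideanSpace ℝ (Fin N)))) ∩ Metric.ball y (1/(n+1 : ℝ)) = {y}}

lemma isClosed_Fset (N n : ℕ) : IsClosed (Fset N n) := by
  rw [← isSeqClosed_iff_isClosed]
  intro X Xlim hmem hconv
  classical
  choose P hP y z hall using hmem
  set c : ℝ := 1/(n+1 : ℝ) with hc
  have hc0 : 0 < c := by positivity
  have hconv1 : Filter.Tendsto (fun k => (X k).1) Filter.atTop (nhds Xlim.1) :=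
    ((continuous_subtype_val.tendsto _).comp hconv)
  obtain ⟨R, hR0, hRlim, hRk⟩ := uniform_container hconv1
  have happ : Continuous fun p : ((EuclideanSpace ℝ (Fin N)) →L[ℝ] (EuclideanSpace ℝ (Fin N)))
      × (EuclideanSpace ℝ (Fin N)) => p.1 p.2 := isBoundedBilinearMap_apply.continuous
  have hPnorm : ∀ k (x : EuclideanSpace ℝ (Fin N)), ‖P k x‖ ≤ ‖x‖ := by
    intro k x
    obtain ⟨L, _, hL⟩ := hP k
    rw [hL]; exact PL_norm_apply_le L x
  have hPball : ∀ k, P k ∈ Metric.closedBall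
      (0 : (EuclideanSpace ℝ (Fin N)) →L[ℝ] (EuclideanSpace ℝ (Fin N))) 1 := by
    intro k
    rw [mem_closedBall_zero_iff]
    obtain ⟨L, _, hL⟩ := hP k
    rw [hL]; exact PL_norm_le L
  obtain ⟨Q, _, φ1, hφ1, hQconv⟩ := (isCompact_closedBall _ _).tendsto_subseq hPball
  have himgball : ∀ k (w : EuclideanSpace ℝ (Fin N)),
      w ∈ ⇑(P k) '' ((X k).1 : Set (EuclideanSpace ℝ (Fin N))) →
      w ∈ Metric.closedBall (0 : EuclideanSpace ℝ (Fin N)) R := by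
    rintro k w ⟨x, hx, rfl⟩
    rw [mem_closedBall_zero_iff]
    calc ‖P k x‖ ≤ ‖x‖ := hPnorm k x
      _ ≤ R := by
        have := hRk k hx
        rwa [mem_closedBall_zero_iff] at this
  obtain ⟨ylim, _, φ2, hφ2, hyconv⟩ := (isCompact_closedBall (0 : EuclideanSpace ℝ (Fin N))
    R).tendsto_subseq (fun k => himgball (φ1 k) _ (hall (φ1 k)).1)
  obtain ⟨zlim, _, φ3, hφ3, hzconv⟩ := (isCompact_closedBall (0 : EuclideanSpace ℝ (Fin N))
    R).tendsto_subseq (fun k => himgball (φ1 (φ2 k)) _ (hall (φ1 (φ2 k))).2.1)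
  set ψ : ℕ → ℕ := fun k => φ1 (φ2 (φ3 k)) with hψdef
  have hψ : StrictMono ψ := hφ1.comp (hφ2.comp hφ3)
  have hQψ : Filter.Tendsto (fun k => P (ψ k)) Filter.atTop (nhds Q) :=
    hQconv.comp (hφ2.comp hφ3).tendsto_atTop
  have hyψ : Filter.Tendsto (fun k => y (ψ k)) Filter.atTop (nhds ylim) :=
    hyconv.comp hφ3.tendsto_atTop
  have hzψ : Filter.Tendsto (fun k => z (ψ k)) Filter.atTop (nhds zlim) := hzconv
  have hXψ : Filter.Tendsto (fun k => (X (ψ k)).1) Filter.atTop (nhds Xlim.1) :=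
    hconv1.comp hψ.tendsto_atTop
  have hQProj : Q ∈ ProjSet N := ProjSet_limit (fun k => hP (ψ k)) hQψ
  -- membership of limits in the image of the limit set
  have key : ∀ (w : ℕ → EuclideanSpace ℝ (Fin N)) (wlim : EuclideanSpace ℝ (Fin N)),
      (∀ k, w k ∈ ⇑(P (ψ k)) '' ((X (ψ k)).1 : Set (EuclideanSpace ℝ (Fin N)))) →
      Filter.Tendsto w Filter.atTop (nhds wlim) →
      wlim ∈ ⇑Q '' (Xlim.1 : Set (EuclideanSpace ℝ (Fin N))) := by
    intro w wlim hw hwconv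
    have hch : ∀ k, ∃ x, x ∈ ((X (ψ k)).1 : Set (EuclideanSpace ℝ (Fin N)))
        ∧ P (ψ k) x = w k := fun k => by
      obtain ⟨x, hx, hxw⟩ := hw k
      exact ⟨x, hx, hxw⟩
    choose xs hxs hxsw using hch
    have hxsball : ∀ k, xs k ∈ Metric.closedBall (0 : EuclideanSpace ℝ (Fin N)) R :=
      fun k => hRk (ψ k) (hxs k)
    obtain ⟨xlim, _, φ4, hφ4, hxconv⟩ :=
      (isCompact_closedBall (0 : EuclideanSpace ℝ (Fin N)) R).tendsto_subseq hxsball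
    have hxlim_mem : xlim ∈ (Xlim.1 : Set (EuclideanSpace ℝ (Fin N))) :=
      limit_mem (hXψ.comp hφ4.tendsto_atTop) (fun k => hxs (φ4 k)) hxconv
    refine ⟨xlim, hxlim_mem, ?_⟩
    have h1 : Filter.Tendsto (fun k => P (ψ (φ4 k)) (xs (φ4 k))) Filter.atTop
        (nhds (Q xlim)) :=
      (happ.tendsto (Q, xlim)).comp (Filter.Tendsto.prodMk_nhds
        (hQψ.comp hφ4.tendsto_atTop) hxconv)
    have h1' : Filter.Tendsto (fun k => w (φ4 k)) Filter.atTop (nhds (Q xlim)) := by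
      apply h1.congr
      intro k
      exact hxsw (φ4 k)
    have h2 : Filter.Tendsto (fun k => w (φ4 k)) Filter.atTop (nhds wlim) :=
      hwconv.comp hφ4.tendsto_atTop
    exact tendsto_nhds_unique h1' h2
  have hylim_mem : ylim ∈ ⇑Q '' (Xlim.1 : Set (EuclideanSpace ℝ (Fin N))) :=
    key (fun k => y (ψ k)) ylim (fun k => (hall (ψ k)).1) hyψ
  have hzlim_mem : zlim ∈ ⇑Q '' (Xlim.1 : Set (EuclideanSpace ℝ (Fin N))) :=
    key (fun k => z (ψ k)) zlim (fun k => (hall (ψ k)).2.1) hzψ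
  have hdistlim : c ≤ dist ylim zlim :=
    ge_of_tendsto (hyψ.dist hzψ) (Filter.Eventually.of_forall fun k => (hall (ψ k)).2.2.1)
  have hgap : (⇑Q '' (Xlim.1 : Set (EuclideanSpace ℝ (Fin N)))) ∩ Metric.ball ylim c
      = {ylim} := by
    apply Set.eq_singleton_iff_unique_mem.mpr
    refine ⟨⟨hylim_mem, Metric.mem_ball_self hc0⟩, ?_⟩
    rintro w ⟨⟨x, hxX, rfl⟩, hwball⟩
    by_contra hne
    obtain ⟨u, hu, huconv⟩ := approach_mem hXψ hxX
    have hwk_mem : ∀ k, P (ψ k) (u k)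
        ∈ ⇑(P (ψ k)) '' ((X (ψ k)).1 : Set (EuclideanSpace ℝ (Fin N))) :=
      fun k => ⟨u k, hu k, rfl⟩
    have hwkconv : Filter.Tendsto (fun k => P (ψ k) (u k)) Filter.atTop (nhds (Q x)) :=
      (happ.tendsto (Q, x)).comp (Filter.Tendsto.prodMk_nhds hQψ huconv)
    have hdconv : Filter.Tendsto (fun k => dist (P (ψ k) (u k)) (y (ψ k))) Filter.atTop
        (nhds (dist (Q x) ylim)) := hwkconv.dist hyψ
    rw [Metric.mem_ball] at hwball
    have hev : ∀ᶠ k in Filter.atTop, dist (P (ψ k) (u k)) (y (ψ k)) < c :=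
      hdconv.eventually_lt_const hwball
    have hev2 : ∀ᶠ k in Filter.atTop, P (ψ k) (u k) = y (ψ k) := by
      filter_upwards [hev] with k hk
      have := (hall (ψ k)).2.2.2
      have hmem2 : P (ψ k) (u k) ∈ (⇑(P (ψ k)) ''
          ((X (ψ k)).1 : Set (EuclideanSpace ℝ (Fin N)))) ∩ Metric.ball (y (ψ k)) c :=
        ⟨hwk_mem k, by rwa [Metric.mem_ball]⟩
      rw [this] at hmem2
      exact hmem2
    have : Filter.Tendsto (fun k => P (ψ k) (u k)) Filter.atTop (nhds ylim) :=
      Filter.Tendsto.congr' (by filter_upwards [hev2] with k hk; exact hk.symm) hyψ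
    exact hne (tendsto_nhds_unique hwkconv this)
  exact ⟨Q, hQProj, ylim, zlim, hylim_mem, hzlim_mem, hdistlim, hgap⟩
end Closed

section Density
open Set Metric Filter TopologicalSpace

variable {N : ℕ}

lemma PL_single_ne {L : Submodule ℝ (EuclideanSpace ℝ (Fin N))} (hL : L ≠ ⊥) :
    ∃ i : Fin N, PL L (EuclideanSpace.single i (1:ℝ)) ≠ 0 := by
  by_contra h
  push_neg at h
  have hzero : ∀ x : EuclideanSpace ℝ (Fin N), PL L x = 0 := by
    intro x
    have hx : x = ∑ i, x i • EuclideanSpace.single i (1:ℝ) := by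
      have := (EuclideanSpace.basisFun (Fin N) ℝ).sum_repr x
      simp only [EuclideanSpace.basisFun_repr, EuclideanSpace.basisFun_apply] at this
      exact this.symm
    rw [hx, map_sum]
    apply Finset.sum_eq_zero
    intro i _
    rw [map_smul, h i, smul_zero]
  obtain ⟨v, hvL, hv0⟩ := Submodule.exists_mem_ne_zero_of_ne_bot hL
  exact hv0 (by rw [← PL_of_mem L hvL, hzero v])

/-- Elements of Euclidean space from plain functions. -/
def mkE (f : Fin N → ℝ) : EuclideanSpace ℝ (Fin N) := WithLp.toLp 2 f

/-- The key construction: any Cantor set can be approximated by a Cantor set all of whose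
nonzero orthogonal projections have no isolated points. -/
lemma exists_good_approx (hN : 1 ≤ N) (X : CantorSets N) {ε : ℝ} (hε : 0 < ε) :
    ∃ X' : CantorSets N, dist X' X < ε ∧
      ∀ L : Submodule ℝ (EuclideanSpace ℝ (Fin N)), L ≠ ⊥ →
      ∀ y ∈ proj L '' (X'.1 : Set (EuclideanSpace ℝ (Fin N))), ∀ δ : ℝ, 0 < δ →
      ∃ w ∈ proj L '' (X'.1 : Set (EuclideanSpace ℝ (Fin N))), w ≠ y ∧ dist w y < δ := by
  classical
  set s : ℝ := ε / (4 * (N + 1)) with hs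
  have hs0 : 0 < s := by positivity
  set r : ℝ := s / 3 with hr
  have hr0 : 0 < r := by positivity
  set A : Set (EuclideanSpace ℝ (Fin N)) := (X.1 : Set (EuclideanSpace ℝ (Fin N))) with hA
  have hAne : A.Nonempty := X.1.nonempty
  have hAcomp : IsCompact A := X.1.isCompact
  set snap : EuclideanSpace ℝ (Fin N) → EuclideanSpace ℝ (Fin N) :=
    fun x => mkE (fun i => s * ⌊x i / s⌋) with hsnap
  have hsnap_coord : ∀ (x : EuclideanSpace ℝ (Fin N)) (i : Fin N),
      (snap x) i = s * ⌊x i / s⌋ := fun x i => rfl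
  have hsnap_dist : ∀ x : EuclideanSpace ℝ (Fin N), dist x (snap x) ≤ N * s := by
    intro x
    apply dist_le_of_coord hs0.le
    intro i
    have h1 : (⌊x i / s⌋ : ℝ) ≤ x i / s := Int.floor_le _
    have h2 : x i / s < ⌊x i / s⌋ + 1 := Int.lt_floor_add_one _
    have h1' : s * ⌊x i / s⌋ ≤ x i := by
      have := (le_div_iff₀ hs0).mp h1
      linarith
    have h2' : x i < s * ⌊x i / s⌋ + s := by
      have := (div_lt_iff₀ hs0).mp h2
      linarith
    rw [hsnap_coord, abs_of_nonneg (by linarith)]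
    linarith
  set S : Set (EuclideanSpace ℝ (Fin N)) := snap '' A with hS
  have hSgrid : ∀ g ∈ S, ∀ i, ∃ m : ℤ, g i = s * m := by
    rintro g ⟨x, _, rfl⟩ i
    exact ⟨⌊x i / s⌋, rfl⟩
  have hSfin : S.Finite := by
    obtain ⟨R, hR⟩ := hAcomp.isBounded.subset_closedBall 0
    set M : ℤ := ⌈R / s⌉ + 1 with hM
    have key : S ⊆ (fun z : Fin N → ℤ => mkE (fun i => s * z i)) ''
        (Set.pi Set.univ (fun _ : Fin N => Set.Icc (-M) M)) := by
      rintro g ⟨x, hx, rfl⟩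
      refine ⟨fun i => ⌊x i / s⌋, Set.mem_univ_pi.mpr fun i => ?_, rfl⟩
      show ⌊x i / s⌋ ∈ Set.Icc (-M) M
      rw [Set.mem_Icc]
      have hxi : |x i| ≤ R := by
        have h0 : dist x (0 : EuclideanSpace ℝ (Fin N)) ≤ R := hR hx
        have hcd := coord_dist_le x (0 : EuclideanSpace ℝ (Fin N)) i
        have hz : (0 : EuclideanSpace ℝ (Fin N)) i = 0 := rfl
        rw [hz, sub_zero] at hcd
        exact hcd.trans h0
      obtain ⟨hxl, hxu⟩ := abs_le.mp hxi
      have hdl : -(R/s) ≤ x i / s := by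
        rw [← neg_div]
        gcongr
      have hdu : x i / s ≤ R / s := by gcongr
      constructor
      · have hfl : -⌈R/s⌉ ≤ ⌊x i / s⌋ := by
          calc -⌈R/s⌉ = ⌊-(R/s)⌋ := (Int.floor_neg).symm
            _ ≤ ⌊x i / s⌋ := Int.floor_mono hdl
        omega
      · have hfu : ⌊x i / s⌋ ≤ ⌈R/s⌉ := (Int.floor_mono hdu).trans (Int.floor_le_ceil _)
        omega
    exact Set.Finite.subset (Set.Finite.image _ (Set.Finite.pi (fun _ => Set.finite_Icc _ _))) key
  set T : Finset (EuclideanSpace ℝ (Fin N)) := hSfin.toFinset with hT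
  set Y : Set (EuclideanSpace ℝ (Fin N)) := ⋃ g ∈ T, cube g r with hY
  have hmemT : ∀ g, g ∈ T ↔ g ∈ S := fun g => hSfin.mem_toFinset
  have hYne : Y.Nonempty := by
    obtain ⟨x₀, hx₀⟩ := hAne
    exact ⟨snap x₀, Set.mem_biUnion ((hmemT _).mpr ⟨x₀, hx₀, rfl⟩) (self_mem_cube _ _)⟩
  have hYcomp : IsCompact Y :=
    T.finite_toSet.isCompact_biUnion (fun g _ => isCompact_cube g hr0)
  have hYperf : Perfect Y := perfect_biUnion T _ (fun g _ => perfect_cube hN g hr0)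
  have hYtd : IsTotallyDisconnected Y := by
    apply td_biUnion_of_separated T _ (show (0:ℝ) < s/3 by positivity)
      (fun g _ => td_cube g hr0)
    intro g hg g' hg' hgg' a ha b hb
    have : ∃ i, g i ≠ g' i := by
      by_contra hcon
      push_neg at hcon
      exact hgg' (PiLp.ext hcon)
    obtain ⟨i, hi⟩ := this
    obtain ⟨m, hm⟩ := hSgrid g ((hmemT _).mp hg) i
    obtain ⟨m', hm'⟩ := hSgrid g' ((hmemT _).mp hg') i
    have hmm' : m ≠ m' := by
      intro h; exact hi (by rw [hm, hm', h])
    have habs : s ≤ |g i - g' i| := by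
      rw [hm, hm', ← mul_sub, abs_mul, abs_of_pos hs0, ← Int.cast_sub, ← Int.cast_abs]
      have h1 : (1:ℤ) ≤ |m - m'| := Int.one_le_abs (by omega)
      have : (1:ℝ) ≤ |m - m'| := by exact_mod_cast h1
      nlinarith
    have hag : |a i - g i| ≤ r := cube_coord hr0 ha i
    have hbg : |b i - g' i| ≤ r := cube_coord hr0 hb i
    have hab : s/3 ≤ |a i - b i| := by
      have h1 := abs_sub_abs_le_abs_sub (g i - g' i) (g i - a i)
      have h2 := abs_sub (a i - b i) (b i - g' i)
      -- direct triangle: |g i - g' i| ≤ |g i - a i| + |a i - b i| + |b i - g' i|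
      have h3 : |g i - g' i| ≤ |a i - g i| + |a i - b i| + |b i - g' i| := by
        calc |g i - g' i| = |(g i - a i) + (a i - b i) + (b i - g' i)| := by ring_nf
          _ ≤ |(g i - a i) + (a i - b i)| + |b i - g' i| := abs_add_le _ _
          _ ≤ |g i - a i| + |a i - b i| + |b i - g' i| := by
              have := abs_add_le (g i - a i) (a i - b i)
              linarith
          _ = |a i - g i| + |a i - b i| + |b i - g' i| := by rw [abs_sub_comm (g i) (a i)]
      have : s ≤ r + |a i - b i| + r := by
        calc s ≤ |g i - g' i| := habs
          _ ≤ |a i - g i| + |a i - b i| + |b i - g' i| := h3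
          _ ≤ r + |a i - b i| + r := by linarith
      rw [hr] at this
      linarith
    exact hab.trans (coord_dist_le a b i)
  set X' : CantorSets N := ⟨⟨⟨Y, hYcomp⟩, hYne⟩, hYne, hYcomp, hYperf, hYtd⟩ with hX'
  have hX'coe : (X'.1 : Set (EuclideanSpace ℝ (Fin N))) = Y := rfl
  refine ⟨X', ?_, ?_⟩
  · -- Hausdorff distance bound
    have hdist : dist X'.1 X.1 ≤ 2 * N * s := by
      rw [Metric.NonemptyCompacts.dist_eq]
      apply Metric.hausdorffDist_le_of_mem_dist (by positivity)
      · -- from Y to A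
        intro a haY
        obtain ⟨g, hgT, hag⟩ := Set.mem_iUnion₂.mp haY
        obtain ⟨x, hxA, hgx⟩ := (hmemT _).mp hgT
        refine ⟨x, hxA, ?_⟩
        calc dist a x ≤ dist a g + dist g x := dist_triangle _ _ _
          _ ≤ N * r + N * s := by
              apply add_le_add
              · have := cube_subset_closedBall hr0 hag
                rwa [Metric.mem_closedBall] at this
              · rw [← hgx, dist_comm]
                exact hsnap_dist x
          _ ≤ 2 * N * s := by
              have hNn : (0:ℝ) ≤ N := Nat.cast_nonneg N
              rw [hr]; nlinarith
      · intro x hxA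
        refine ⟨snap x, Set.mem_biUnion ((hmemT _).mpr ⟨x, hxA, rfl⟩) (self_mem_cube _ _), ?_⟩
        have hNn : (0:ℝ) ≤ N := Nat.cast_nonneg N
        nlinarith [hsnap_dist x]
    have hlt : 2 * (N:ℝ) * s < ε := by
      have h4 : (0:ℝ) < 4 * ((N:ℝ) + 1) := by positivity
      rw [hs]
      rw [show 2 * (N:ℝ) * (ε / (4 * (N + 1))) = (2 * N * ε) / (4 * (N + 1)) by ring]
      rw [div_lt_iff₀ h4]
      have hNn : (0:ℝ) ≤ N := Nat.cast_nonneg N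
      nlinarith
    calc dist X' X = dist X'.1 X.1 := Subtype.dist_eq X' X
      _ ≤ 2 * N * s := hdist
      _ < ε := hlt
  · -- no isolated points in projections
    intro L hL y hy δ hδ
    rw [proj_eq_PL] at hy ⊢
    obtain ⟨i₀, hi₀⟩ := PL_single_ne hL
    set e : EuclideanSpace ℝ (Fin N) := EuclideanSpace.single i₀ (1:ℝ) with he
    have hPe : 0 < ‖PL L e‖ := norm_pos_iff.mpr hi₀
    rw [hX'coe] at hy
    obtain ⟨x, hxY, rfl⟩ := hy
    obtain ⟨g, hgT, hxg⟩ := Set.mem_iUnion₂.mp hxY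
    obtain ⟨a, ha0, haabs, hamem⟩ := cube_perturb hr0 hxg
      (show 0 < δ / ‖PL L e‖ by positivity) i₀
    refine ⟨PL L (x + a • e), ?_, ?_, ?_⟩
    · rw [hX'coe]
      exact ⟨x + a • e, Set.mem_biUnion hgT hamem, rfl⟩
    · have hdiff : PL L (x + a • e) - PL L x = a • PL L e := by
        rw [map_add, map_smul]; abel
      intro hcon
      have : a • PL L e = 0 := by rw [← hdiff, hcon, sub_self]
      exact hi₀ ((smul_eq_zero.mp this).resolve_left ha0)
    · have hdiff : PL L (x + a • e) - PL L x = a • PL L e := by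
        rw [map_add, map_smul]; abel
      rw [dist_eq_norm, hdiff, norm_smul]
      calc ‖a‖ * ‖PL L e‖ < (δ / ‖PL L e‖) * ‖PL L e‖ := by
            apply mul_lt_mul_of_pos_right _ hPe
            simpa using haabs
        _ = δ := div_mul_cancel₀ _ hPe.ne'
end Density

theorem stmt_13 (N : ℕ) (hN : 1 ≤ N)
    (I : Set (CantorSets N))
    (hI : I = {X : CantorSets N | ∃ L : Submodule ℝ (EuclideanSpace ℝ (Fin N)), L ≠ ⊥ ∧
      (proj L '' (X.1 : Set (EuclideanSpace ℝ (Fin N)))).Nontrivial ∧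
      ∃ y ∈ proj L '' (X.1 : Set (EuclideanSpace ℝ (Fin N))), ∃ ε > (0 : ℝ),
        (proj L '' (X.1 : Set (EuclideanSpace ℝ (Fin N)))) ∩ Metric.ball y ε = {y}}) :
    IsMeagre I ∧ ∃ F : ℕ → Set (CantorSets N), (∀ n, IsClosed (F n)) ∧ I = ⋃ n, F n := by
  have hIF : I = ⋃ n, Fset N n := by
    rw [hI]
    ext X
    simp only [Set.mem_setOf_eq, Set.mem_iUnion, Fset]
    constructor
    · rintro ⟨L, hL, hnt, y, hy, ε, hε, hgap⟩
      obtain ⟨a, ha, b, hb, hab⟩ := hnt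
      have hz : ∃ z ∈ proj L '' (X.1 : Set (EuclideanSpace ℝ (Fin N))), z ≠ y := by
        by_cases h : a = y
        · exact ⟨b, hb, fun hby => hab (h.trans hby.symm)⟩
        · exact ⟨a, ha, h⟩
      obtain ⟨z, hzmem, hzy⟩ := hz
      have hzball : ε ≤ dist z y := by
        by_contra hlt
        push_neg at hlt
        have hmem2 : z ∈ proj L '' (X.1 : Set (EuclideanSpace ℝ (Fin N)))
            ∩ Metric.ball y ε := ⟨hzmem, by rwa [Metric.mem_ball]⟩
        rw [hgap] at hmem2
        exact hzy hmem2
      obtain ⟨n, hn⟩ := exists_nat_one_div_lt hε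
      refine ⟨n, PL L, ⟨L, hL, rfl⟩, y, z, ?_, ?_, ?_, ?_⟩
      · rw [← proj_eq_PL]; exact hy
      · rw [← proj_eq_PL]; exact hzmem
      · rw [dist_comm]; exact le_trans hn.le hzball
      · rw [← proj_eq_PL]
        apply Set.eq_singleton_iff_unique_mem.mpr
        refine ⟨⟨hy, Metric.mem_ball_self (by positivity)⟩, ?_⟩
        rintro w ⟨hwim, hwball⟩
        have hmem2 : w ∈ proj L '' (X.1 : Set (EuclideanSpace ℝ (Fin N)))
            ∩ Metric.ball y ε := by
          refine ⟨hwim, ?_⟩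
          rw [Metric.mem_ball] at hwball ⊢
          exact hwball.trans hn
        rw [hgap] at hmem2
        exact hmem2
    · rintro ⟨n, P, ⟨L, hL, rfl⟩, y, z, hy, hz, hd, hgap⟩
      have hc0 : (0:ℝ) < 1/(n+1 : ℝ) := by positivity
      refine ⟨L, hL, ?_, y, by rw [proj_eq_PL]; exact hy, 1/(n+1 : ℝ), hc0, ?_⟩
      · rw [proj_eq_PL]
        refine ⟨y, hy, z, hz, ?_⟩
        intro h
        rw [h, dist_self] at hd
        linarith
      · rw [proj_eq_PL]; exact hgap
  refine ⟨?_, fun n => Fset N n, fun n => isClosed_Fset N n, hIF⟩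
  rw [hIF]
  apply isMeagre_iUnion
  intro n
  have hdense : Dense (Fset N n)ᶜ := by
    rw [Metric.dense_iff]
    intro X rr hrr
    obtain ⟨X', hX'd, hX'good⟩ := exists_good_approx hN X hrr
    refine ⟨X', Metric.mem_ball.mpr hX'd, ?_⟩
    intro hmem
    obtain ⟨P, ⟨L, hL, rfl⟩, y, z, hy, hz, hd, hgap⟩ := hmem
    have hy' : y ∈ proj L '' (X'.1 : Set (EuclideanSpace ℝ (Fin N))) := by
      rw [proj_eq_PL]; exact hy
    obtain ⟨w, hw, hwy, hwd⟩ := hX'good L hL y hy' (1/(n+1:ℝ)) (by positivity)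
    have hmem2 : w ∈ ⇑(PL L) '' (X'.1 : Set (EuclideanSpace ℝ (Fin N)))
        ∩ Metric.ball y (1/(n+1:ℝ)) :=
      ⟨by rw [← proj_eq_PL]; exact hw, Metric.mem_ball.mpr hwd⟩
    rw [hgap] at hmem2
    exact hwy hmem2
  have hnd : IsNowhereDense (Fset N n) :=
    (isClosed_Fset N n).isNowhereDense_iff.mpr (interior_eq_empty_iff_dense_compl.mpr hdense)
  rw [isMeagre_iff_countable_union_isNowhereDense]
  exact ⟨{Fset N n}, by simpa using hnd, Set.countable_singleton _, by simp⟩
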